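/- arXiv:2605.28460 — 3 statements merged into one kernel-verified Lean document; each statement's English description precedes it below -/
import Mathlib

section
/- Let E be an elliptic curve over F with identity ∞, and D = Σ n_p·p a divisor with support in E(F). Then D is linearly equivalent to (Σ⁽⊕⁾ D) + (deg(D) − 1)·∞. -/
open WeierstrassCurve.Affine

variable {F : Type*} [Field F] {W : WeierstrassCurve F} [W.IsElliptic]

/-- A divisor on `E` with support in `E(F)`: a finite formal `ℤ`-linear combination of
`F`-points; the identity `0` of the point group is the point at infinity `∞`. -/
abbrev DivisorOn (W : WeierstrassCurve F) [W.IsElliptic] := W.toAffine.Point →₀ ℤ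

/-- The degree of a divisor: the sum of its coefficients. -/
noncomputable def degDiv (D : DivisorOn W) : ℤ := D.sum fun _ n => n

open Classical in
/-- The group-law sum `Σ⁽⊕⁾ D` of a divisor, computed in the group `E(F)`. -/
noncomputable def gsumDiv (D : DivisorOn W) : W.toAffine.Point := D.sum fun p n => n • p

open Classical in
/-- `D` is a principal divisor, i.e. `D = div f` for a nonzero rational function `f` on `E`;
encoded through the class group of the affine coordinate ring `F[W]` (invertible fractional
ideals modulo principal ones): `D` is principal iff `deg D = 0` and the class of
`∏ₚ Iₚ^{nₚ}` is trivial, where `[Iₚ] = Point.toClass p`. -/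
noncomputable def IsPrincipalDivisor (D : DivisorOn W) : Prop :=
  degDiv D = 0 ∧ D.sum (fun p n => n • WeierstrassCurve.Affine.Point.toClass p) = 0

/-- Linear equivalence of divisors: `D₁ ∼ D₂` iff `D₁ - D₂` is the divisor of a rational
function. -/
noncomputable def LinearlyEquivalentDiv (D₁ D₂ : DivisorOn W) : Prop :=
  IsPrincipalDivisor (D₁ - D₂)

/-! The degree, the group-law sum and the ideal class of a divisor are the `ℤ`-linear extensions
of `p ↦ 1`, `p ↦ p` and `p ↦ [Iₚ]`. Since `p ↦ [Iₚ]` is a group homomorphism, the class of `D`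
is the class of `Σ⁽⊕⁾ D`, and both `deg` and the class are additive, so the two conditions for
`D - (Σ⁽⊕⁾ D) - (deg D - 1)·∞` to be principal reduce to `[I_∞] = 0`. -/

open Finsupp

lemma degDiv_eq_linearCombination (D : DivisorOn W) :
    degDiv D = linearCombination ℤ (fun _ ↦ (1 : ℤ)) D := by
  simp [degDiv, linearCombination_apply]

open Classical in
lemma gsumDiv_eq_linearCombination (D : DivisorOn W) :
    gsumDiv D = linearCombination ℤ id D := by
  rw [gsumDiv, linearCombination_apply]
  rfl

open Classical in
lemma isPrincipalDivisor_iff (D : DivisorOn W) :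
    IsPrincipalDivisor D ↔ linearCombination ℤ (fun _ ↦ (1 : ℤ)) D = 0 ∧
      linearCombination ℤ (fun p ↦ Point.toClass p) D = 0 := by
  simp only [IsPrincipalDivisor, degDiv_eq_linearCombination, linearCombination_apply]

open Classical in
lemma toClass_gsumDiv (D : DivisorOn W) :
    Point.toClass (gsumDiv D) = linearCombination ℤ (fun p ↦ Point.toClass p) D := by
  rw [gsumDiv_eq_linearCombination]
  exact apply_linearCombination_id ℤ Point.toClass.toIntLinearMap D

/-- **Abel's theorem, divisor-class form.**  Every divisor `D = Σ nₚ·p` with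
support in `E(F)` is linearly equivalent to `(Σ⁽⊕⁾ D) + (deg D − 1)·∞`. -/
theorem linearlyEquivalent_gsum_add_deg_sub_one_smul_infty (D : DivisorOn W) :
    LinearlyEquivalentDiv D
      (Finsupp.single (gsumDiv D) 1 + Finsupp.single (0 : W.toAffine.Point) (degDiv D - 1)) := by
  rw [LinearlyEquivalentDiv, isPrincipalDivisor_iff]
  simp only [map_sub, map_add, linearCombination_single, ← degDiv_eq_linearCombination,
    ← toClass_gsumDiv, Point.toClass_zero]
  constructor
  · simp only [smul_eq_mul, mul_one]
    ring
  · rw [one_smul, smul_zero, add_zero, sub_self]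
end

section
/- Let E be an elliptic curve over a field F, ∞ its identity, and r ≥ 1 an integer. Let S = {q₁, …, q_r} ⊆ E(F)\{∞} be r distinct points with q₁ ⊕ ⋯ ⊕ q_r ≠ ∞. Then the evaluation map from the Riemann–Roch space H⁰(E, O_E(r·∞)) to Fʳ sending f to (f(q₁), …, f(q_r)) is an isomorphism of F-vector spaces. -/
open Polynomial WeierstrassCurve.Affine
open scoped Polynomial.Bivariate

variable {F : Type*} [Field F] (W : WeierstrassCurve.Affine F)

/-- The coordinate function `x` in the coordinate ring `F[W]` of the Weierstrass curve. -/
noncomputable def xElt : W.CoordinateRing := CoordinateRing.mk W (C X)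

/-- The coordinate function `y` in the coordinate ring `F[W]`. -/
noncomputable def yElt : W.CoordinateRing := CoordinateRing.mk W Y

/-- The Riemann–Roch space `H⁰(E, O_E(r·∞))` of rational functions on `E` whose only pole
is at `∞` of order at most `r`: it is the `F`-span of the monomials `xⁱyʲ` with
`2i + 3j ≤ r`, `j ≤ 1` (of pole order `2i + 3j` at `∞`). -/
noncomputable def RRSpaceInfty (r : ℕ) : Submodule F W.CoordinateRing :=
  Submodule.span F {f | ∃ i j : ℕ, 2 * i + 3 * j ≤ r ∧ j ≤ 1 ∧ f = xElt W ^ i * yElt W ^ j}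

/-- Evaluation of a function in the coordinate ring at an affine point `(x, y)` of the
curve, via the canonical isomorphism `F[W] ⧸ ⟨X - x, Y - y⟩ ≃ F`. -/
noncomputable def evalAtPoint {x y : F} (h : W.Equation x y) : W.CoordinateRing →ₐ[F] F :=
  (CoordinateRing.quotientXYIdealEquiv (W' := W) (y := C y) h).toAlgHom.comp
    (Ideal.Quotient.mkₐ F (CoordinateRing.XYIdeal W x (C y)))

/-!
The monomials `xⁱ`, `xⁱy` of pole order at most `r` form a basis of `H⁰(E, O_E(r·∞))`, so the
space has dimension `r` and it suffices to prove injectivity. Let `f ≠ 0` vanish at the `qᵢ`. The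
norm of `f` down to `F[x]` has degree equal to the pole order of `f`, at most `r`, so
`F[E] ⧸ (f)` has dimension at most `r`; it surjects onto `Fʳ` by the Chinese remainder theorem,
hence `(f) = ∏ᵢ 𝔪_{qᵢ}`. So the ideal class of `∏ᵢ 𝔪_{qᵢ}`, which is the image of
`q₁ ⊕ ⋯ ⊕ q_r` under the injective homomorphism `E(F) → Cl(F[E])`, is trivial: contradiction.
-/

lemma WithBot.two_nsmul_add_le_of_lt {a : WithBot ℕ} {n m k : ℕ} (ha : a < n)
    (h : ∀ i < n, 2 * i + k ≤ m) : 2 • a + k ≤ m := by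
  induction a with
  | bot => simp
  | coe i =>
    rw [← Nat.cast_withBot, Nat.cast_lt] at ha
    rw [← Nat.cast_withBot, two_nsmul]
    exact_mod_cast (by have := h i ha; omega : i + i + k ≤ m)

section AlgHomToField

open Function

variable {K A : Type*} [Field K] [CommRing A] [Algebra K A]

theorem AlgHom.eq_of_ker_eq {φ ψ : A →ₐ[K] K} (h : RingHom.ker φ = RingHom.ker ψ) : φ = ψ := by
  ext a
  have ha : a - algebraMap K A (φ a) ∈ RingHom.ker ψ := by
    rw [← h, RingHom.mem_ker, map_sub, AlgHom.commutes, Algebra.algebraMap_self,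
      RingHom.id_apply, sub_self]
  rwa [RingHom.mem_ker, map_sub, AlgHom.commutes, Algebra.algebraMap_self, RingHom.id_apply,
    sub_eq_zero, eq_comm] at ha

theorem AlgHom.isMaximal_ker (φ : A →ₐ[K] K) : (RingHom.ker φ).IsMaximal :=
  RingHom.ker_isMaximal_of_surjective φ fun c => ⟨algebraMap K A c, φ.commutes c⟩

variable {ι : Type*} {φ : ι → A →ₐ[K] K}

theorem AlgHom.pairwise_isCoprime_ker (hφ : Injective φ) :
    Pairwise (IsCoprime on fun i => RingHom.ker (φ i)) := fun i j hij =>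
  Ideal.isCoprime_iff_sup_eq.mpr <| (φ i).isMaximal_ker.coprime_of_ne (φ j).isMaximal_ker
    fun h => hij (hφ (eq_of_ker_eq h))

theorem AlgHom.pi_surjective_of_injective [_root_.Finite ι] (hφ : Injective φ) :
    Surjective (AlgHom.pi φ) := by
  intro v
  obtain ⟨a, ha⟩ := Ideal.pi_quotient_surjective (pairwise_isCoprime_ker hφ)
    fun i => Ideal.Quotient.mk _ (algebraMap K A (v i))
  refine ⟨a, funext fun i => ?_⟩
  have hi := Ideal.Quotient.eq.mp (ha i)
  rwa [RingHom.mem_ker, map_sub, AlgHom.commutes, Algebra.algebraMap_self, RingHom.id_apply,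
    sub_eq_zero] at hi

theorem Ideal.eq_prod_ker_of_finrank_quotient_le [Fintype ι] (hφ : Injective φ)
    {J : Ideal A} [Module.Finite K (A ⧸ J)] (hJ : ∀ i, J ≤ RingHom.ker (φ i))
    (hrank : Module.finrank K (A ⧸ J) ≤ Fintype.card ι) :
    J = ∏ i, RingHom.ker (φ i) := by
  set ev := Quotient.liftₐ J (AlgHom.pi φ) fun a ha => funext fun i => hJ i ha
  have hsurj : Surjective ev.toLinearMap := fun v => by
    obtain ⟨a, rfl⟩ := AlgHom.pi_surjective_of_injective hφ v
    exact ⟨Quotient.mk J a, rfl⟩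
  have hinj : Injective ev.toLinearMap :=
    (LinearMap.injective_iff_surjective_of_finrank_eq_finrank <| le_antisymm
      (hrank.trans_eq (Module.finrank_fintype_fun_eq_card K).symm)
      (LinearMap.finrank_le_finrank_of_surjective hsurj)).mpr hsurj
  rw [prod_eq_iInf_of_pairwise_isCoprime fun i _ j _ hij => AlgHom.pairwise_isCoprime_ker hφ hij]
  refine le_antisymm (le_iInf₂ fun i _ => hJ i) fun a ha => ?_
  rw [← Quotient.eq_zero_iff_mem]
  refine hinj (funext fun i => ?_)
  rw [map_zero]
  exact (Submodule.mem_iInf _).mp ((Submodule.mem_iInf _).mp ha i) (Finset.mem_univ i)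

end AlgHomToField

section Evaluation

lemma xElt_sub_algebraMap (x : F) :
    xElt W - algebraMap F _ x = CoordinateRing.XClass W x := by
  rw [xElt, CoordinateRing.XClass, C_sub, map_sub]; rfl

lemma yElt_sub_algebraMap (y : F) :
    yElt W - algebraMap F _ y = CoordinateRing.YClass W (C y) := by
  rw [yElt, CoordinateRing.YClass, map_sub]; rfl

variable {x y : F} (h : W.Equation x y)

lemma evalAtPoint_eq_zero_iff (g : W.CoordinateRing) :
    evalAtPoint W h g = 0 ↔ g ∈ CoordinateRing.XYIdeal W x (C y) :=
  (map_eq_zero_iff (CoordinateRing.quotientXYIdealEquiv (W' := W) (y := C y) h)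
    (AlgEquiv.injective _)).trans Ideal.Quotient.eq_zero_iff_mem

lemma ker_evalAtPoint : RingHom.ker (evalAtPoint W h) = CoordinateRing.XYIdeal W x (C y) :=
  Ideal.ext (evalAtPoint_eq_zero_iff W h)

lemma evalAtPoint_xElt : evalAtPoint W h (xElt W) = x := by
  have hx : xElt W - algebraMap F _ x ∈ CoordinateRing.XYIdeal W x (C y) :=
    xElt_sub_algebraMap W x ▸ Ideal.subset_span (Set.mem_insert _ _)
  rwa [← evalAtPoint_eq_zero_iff, map_sub, AlgHom.commutes, sub_eq_zero] at hx

lemma evalAtPoint_yElt : evalAtPoint W h (yElt W) = y := by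
  have hy : yElt W - algebraMap F _ y ∈ CoordinateRing.XYIdeal W x (C y) :=
    yElt_sub_algebraMap W y ▸ Ideal.subset_span (Set.mem_insert_of_mem _ rfl)
  rwa [← evalAtPoint_eq_zero_iff, map_sub, AlgHom.commutes, sub_eq_zero] at hy

end Evaluation

lemma eq_of_evalAtPoint_eq {x₁ y₁ x₂ y₂ : F} (h₁ : W.Equation x₁ y₁) (h₂ : W.Equation x₂ y₂)
    (he : evalAtPoint W h₁ = evalAtPoint W h₂) : (x₁, y₁) = (x₂, y₂) :=
  Prod.ext (by simpa only [evalAtPoint_xElt] using congr($he (xElt W)))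
    (by simpa only [evalAtPoint_yElt] using congr($he (yElt W)))

noncomputable def smulBasisDegreeLT (a b : ℕ) :
    degreeLT F a × degreeLT F b →ₗ[F] W.CoordinateRing :=
  (LinearMap.id.smulRight 1 ∘ₗ (degreeLT F a).subtype).coprod
    (LinearMap.id.smulRight (yElt W) ∘ₗ (degreeLT F b).subtype)

lemma smulBasisDegreeLT_apply {a b : ℕ} (pq : degreeLT F a × degreeLT F b) :
    smulBasisDegreeLT W a b pq = (pq.1 : F[X]) • 1 + (pq.2 : F[X]) • yElt W :=
  rfl

lemma smulBasisDegreeLT_injective (a b : ℕ) : Function.Injective (smulBasisDegreeLT W a b) := by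
  rw [← LinearMap.ker_eq_bot, Submodule.eq_bot_iff]
  rintro ⟨p, q⟩ hpq
  obtain ⟨hp, hq⟩ := CoordinateRing.smul_basis_eq_zero hpq
  exact Prod.ext (Subtype.ext hp) (Subtype.ext hq)

lemma smul_mem_RRSpaceInfty_of_mem_degreeLT {r n : ℕ} {v : W.CoordinateRing} {p : F[X]}
    (hp : p ∈ degreeLT F n) (hv : ∀ k < n, (X ^ k : F[X]) • v ∈ RRSpaceInfty W r) :
    p • v ∈ RRSpaceInfty W r := by
  classical
  rw [degreeLT_eq_span_X_pow] at hp
  induction hp using Submodule.span_induction with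
  | mem p hp =>
    obtain ⟨k, hk, rfl⟩ := Finset.mem_image.mp hp
    exact hv k (Finset.mem_range.mp hk)
  | zero => rw [zero_smul]; exact zero_mem _
  | add p q _ _ hp hq => rw [add_smul]; exact add_mem hp hq
  | smul c p _ hp => rw [smul_assoc]; exact Submodule.smul_mem _ c hp

lemma X_pow_smul_one (i : ℕ) : (X ^ i : F[X]) • (1 : W.CoordinateRing) = xElt W ^ i := by
  rw [CoordinateRing.smul, mul_one, xElt, ← map_pow, ← map_pow]

lemma X_pow_smul_yElt (i : ℕ) : (X ^ i : F[X]) • yElt W = xElt W ^ i * yElt W := by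
  rw [CoordinateRing.smul, xElt, ← map_pow, ← map_pow]

/-- The monomials `xⁱ` and `xⁱy` have pole orders `2i` and `2i + 3` at `∞`, which gives the
degree bounds `2i ≤ r ↔ i < r / 2 + 1` and `2i + 3 ≤ r ↔ i < (r - 1) / 2`. -/
lemma range_smulBasisDegreeLT (r : ℕ) :
    LinearMap.range (smulBasisDegreeLT W (r / 2 + 1) ((r - 1) / 2)) = RRSpaceInfty W r := by
  apply le_antisymm
  · rintro _ ⟨⟨⟨p, hp⟩, ⟨q, hq⟩⟩, rfl⟩
    rw [smulBasisDegreeLT_apply]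
    refine add_mem (smul_mem_RRSpaceInfty_of_mem_degreeLT W hp fun k hk => ?_)
      (smul_mem_RRSpaceInfty_of_mem_degreeLT W hq fun k hk => ?_)
    · exact Submodule.subset_span
        ⟨k, 0, by omega, by omega, by rw [X_pow_smul_one, pow_zero, mul_one]⟩
    · exact Submodule.subset_span ⟨k, 1, by omega, le_rfl, by rw [X_pow_smul_yElt, pow_one]⟩
  · rw [RRSpaceInfty, Submodule.span_le]
    rintro _ ⟨i, j, hij, hj, rfl⟩
    interval_cases j
    · refine ⟨(⟨X ^ i, ?_⟩, 0), ?_⟩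
      · exact mem_degreeLT.mpr ((degree_X_pow_le i).trans_lt
          (by exact_mod_cast (by omega : i < r / 2 + 1)))
      · rw [smulBasisDegreeLT_apply, ZeroMemClass.coe_zero, zero_smul, add_zero, X_pow_smul_one,
          pow_zero, mul_one]
    · refine ⟨(0, ⟨X ^ i, ?_⟩), ?_⟩
      · exact mem_degreeLT.mpr ((degree_X_pow_le i).trans_lt
          (by exact_mod_cast (by omega : i < (r - 1) / 2)))
      · rw [smulBasisDegreeLT_apply, ZeroMemClass.coe_zero, zero_smul, zero_add, X_pow_smul_yElt,
          pow_one]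

instance (r : ℕ) : FiniteDimensional F (RRSpaceInfty W r) := by
  rw [← range_smulBasisDegreeLT]
  infer_instance

lemma finrank_RRSpaceInfty {r : ℕ} (hr : 1 ≤ r) : Module.finrank F (RRSpaceInfty W r) = r := by
  rw [← range_smulBasisDegreeLT,
    LinearMap.finrank_range_of_inj (smulBasisDegreeLT_injective W _ _), Module.finrank_prod,
    (degreeLTEquiv F _).finrank_eq, (degreeLTEquiv F _).finrank_eq,
    Module.finrank_fin_fun, Module.finrank_fin_fun]
  omega

lemma natDegree_norm_le_of_mem_RRSpaceInfty {r : ℕ} {f : W.CoordinateRing}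
    (hf : f ∈ RRSpaceInfty W r) : (Algebra.norm F[X] f).natDegree ≤ r := by
  rw [← range_smulBasisDegreeLT] at hf
  obtain ⟨⟨⟨p, hp⟩, ⟨q, hq⟩⟩, rfl⟩ := hf
  rw [mem_degreeLT] at hp hq
  rw [smulBasisDegreeLT_apply, natDegree_le_iff_degree_le, yElt,
    CoordinateRing.degree_norm_smul_basis, max_le_iff]
  exact ⟨by simpa using WithBot.two_nsmul_add_le_of_lt hp (k := 0) (m := r) (by omega),
    WithBot.two_nsmul_add_le_of_lt hq (k := 3) (by omega)⟩

lemma finite_quotient_span_singleton {f : W.CoordinateRing} (hf : f ≠ 0) :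
    Module.Finite F (W.CoordinateRing ⧸ Ideal.span {f}) :=
  Module.Finite.equiv (Ideal.quotientEquivDirectSum F (CoordinateRing.basis W)
    (by rwa [ne_eq, Ideal.span_singleton_eq_bot])).symm

open scoped nonZeroDivisors in
lemma sum_some_eq_zero_of_prod_XYIdeal_eq_span [DecidableEq F] {ι : Type*} [Fintype ι]
    {x y : ι → F} (h : ∀ i, W.Nonsingular (x i) (y i)) {f : W.CoordinateRing} (hf : f ≠ 0)
    (hprod : ∏ i, CoordinateRing.XYIdeal W (x i) (C (y i)) = Ideal.span {f}) :
    ∑ i, Point.some _ _ (h i) = 0 := by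
  have hclass (i : ι) : Point.toClass (Point.some _ _ (h i)) =
      Additive.ofMul (ClassGroup.mk W.FunctionField (CoordinateRing.XYIdeal' (W := W) (h i))) :=
    rfl
  rw [← Point.toClass_eq_zero, map_sum, Finset.sum_congr rfl fun i _ => hclass i, ← ofMul_prod,
    ← map_prod, ofMul_eq_zero]
  refine (ClassGroup.mk_eq_one_of_coe_ideal ?_).mpr ⟨f, hf, hprod⟩
  rw [Units.coe_prod]
  exact (map_prod (FractionalIdeal.coeIdealHom W.CoordinateRing⁰ W.FunctionField) _ _).symm

lemma eq_zero_of_mem_RRSpaceInfty_of_evalAtPoint_eq_zero [DecidableEq F] {ι : Type*}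
    [Fintype ι] {x y : ι → F} (h : ∀ i, W.Nonsingular (x i) (y i))
    (hdist : Function.Injective fun i => (x i, y i)) (hsum : ∑ i, Point.some _ _ (h i) ≠ 0)
    {r : ℕ} (hr : r ≤ Fintype.card ι) {f : W.CoordinateRing} (hf : f ∈ RRSpaceInfty W r)
    (hev : ∀ i, evalAtPoint W (h i).1 f = 0) : f = 0 := by
  by_contra hf0
  have := finite_quotient_span_singleton W hf0
  refine hsum (sum_some_eq_zero_of_prod_XYIdeal_eq_span W h hf0 ?_)
  have hφ : Function.Injective fun i => evalAtPoint W (h i).1 := fun i j hij =>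
    hdist (eq_of_evalAtPoint_eq W _ _ hij)
  have hspan := Ideal.eq_prod_ker_of_finrank_quotient_le hφ (J := Ideal.span {f})
    (fun i => (Ideal.span_singleton_le_iff_mem _).mpr (hev i)) <| by
      rw [finrank_quotient_span_eq_natDegree_norm (CoordinateRing.basis W) hf0]
      exact (natDegree_norm_le_of_mem_RRSpaceInfty W hf).trans hr
  simpa only [ker_evalAtPoint] using hspan.symm

open Classical in
theorem evaluation_map_bijective (r : ℕ) (hr : 1 ≤ r)
    (x y : Fin r → F) (h : ∀ i, W.Nonsingular (x i) (y i))
    (hdist : Function.Injective fun i => (x i, y i))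
    (hsum : ∑ i, WeierstrassCurve.Affine.Point.some _ _ (h i) ≠ 0) :
    Function.Bijective fun f : RRSpaceInfty W r =>
      fun i : Fin r => evalAtPoint W (h i).1 (f : W.CoordinateRing) := by
  set ev : RRSpaceInfty W r →ₗ[F] (Fin r → F) :=
    (AlgHom.pi fun i => evalAtPoint W (h i).1).toLinearMap ∘ₗ (RRSpaceInfty W r).subtype
  have hinj : Function.Injective ev := by
    rw [← LinearMap.ker_eq_bot, Submodule.eq_bot_iff]
    intro f hf
    exact Subtype.ext <| eq_zero_of_mem_RRSpaceInfty_of_evalAtPoint_eq_zero W h hdist hsum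
      (Fintype.card_fin r).ge f.2 (congr_fun (LinearMap.mem_ker.mp hf))
  exact ⟨hinj, (LinearMap.injective_iff_surjective_of_finrank_eq_finrank
    (by rw [finrank_RRSpaceInfty W hr, Module.finrank_fin_fun])).mp hinj⟩
end

section
/- Let A be an integral domain with an action of a finite group G by ring automorphisms. Then Frac(A^G) = (Frac A)^G, where A^G is the subring of G-invariants and (Frac A)^G the subfield of G-invariant fractions. -/
/-! Write a `G`-invariant fraction as `a / b` and multiply numerator and denominator by
`c = ∏_{g ≠ 1} g • b`. The new denominator `b * c = ∏_g g • b` is `G`-invariant, and then so is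
the new numerator, being the product of the invariant fraction with the invariant denominator. -/

open Finset

theorem prod_smul_eq_mul_prod_erase_one {G M : Type*} [Group G] [Fintype G] [DecidableEq G]
    [CommMonoid M] [MulAction G M] (b : M) :
    ∏ g : G, g • b = b * ∏ g ∈ univ.erase (1 : G), g • b := by
  rw [← mul_prod_erase univ (· • b) (mem_univ (1 : G)), one_smul]

section Invariants

variable {A K G : Type*} [CommRing A] [Field K] [Algebra A K] [Group G]
  [MulSemiringAction G A] [MulSemiringAction G K]

theorem smul_eq_self_of_algebraMap_eq_mul (hinj : Function.Injective (algebraMap A K))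
    (hcomp : ∀ (g : G) (a : A), g • algebraMap A K a = algebraMap A K (g • a))
    {x : K} (hx : ∀ g : G, g • x = x) {a b : A} (hb : ∀ g : G, g • b = b)
    (hab : algebraMap A K a = x * algebraMap A K b) (g : G) : g • a = a :=
  hinj <| by rw [← hcomp, hab, smul_mul', hx, hcomp, hb]

theorem smul_algebraMap_div_eq_self
    (hcomp : ∀ (g : G) (a : A), g • algebraMap A K a = algebraMap A K (g • a))
    {a b : A} (ha : ∀ g : G, g • a = a) (hb : ∀ g : G, g • b = b) (g : G) :
    g • (algebraMap A K a / algebraMap A K b) = algebraMap A K a / algebraMap A K b := by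
  rw [smul_div₀', hcomp, hcomp, ha, hb]

theorem IsFractionRing.exists_invariant_div_of_invariant [IsDomain A] [IsFractionRing A K]
    [Finite G] (hcomp : ∀ (g : G) (a : A), g • algebraMap A K a = algebraMap A K (g • a))
    {x : K} (hx : ∀ g : G, g • x = x) :
    ∃ a b : A, (∀ g : G, g • a = a) ∧ (∀ g : G, g • b = b) ∧ b ≠ 0 ∧
      x = algebraMap A K a / algebraMap A K b := by
  classical
  cases nonempty_fintype G
  obtain ⟨a, b, hb, rfl⟩ := IsFractionRing.div_surjective (A := A) x
  set c := ∏ g ∈ univ.erase (1 : G), g • b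
  have hbc_inv : ∀ g : G, g • (b * c) = b * c := fun g => by
    rw [← prod_smul_eq_mul_prod_erase_one, smul_prod_perm]
  have hbc : b * c ≠ 0 := by
    rw [← prod_smul_eq_mul_prod_erase_one]
    exact prod_ne_zero_iff.mpr fun g _ => (smul_ne_zero_iff_ne g).mpr (nonZeroDivisors.ne_zero hb)
  have hfbc : algebraMap A K (b * c) ≠ 0 :=
    IsFractionRing.to_map_ne_zero_of_mem_nonZeroDivisors (mem_nonZeroDivisors_of_ne_zero hbc)
  have hfc : algebraMap A K c ≠ 0 := by
    rw [map_mul] at hfbc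
    exact right_ne_zero_of_mul hfbc
  have hx' : algebraMap A K a / algebraMap A K b =
      algebraMap A K (a * c) / algebraMap A K (b * c) := by
    rw [map_mul, map_mul, mul_div_mul_right _ _ hfc]
  rw [hx'] at hx ⊢
  exact ⟨a * c, b * c,
    smul_eq_self_of_algebraMap_eq_mul (IsFractionRing.injective A K) hcomp hx hbc_inv
      (div_mul_cancel₀ _ hfbc).symm,
    hbc_inv, hbc, rfl⟩

end Invariants

/-- Let `A` be an integral domain with an action of a finite group `G`
by ring automorphisms, extended compatibly to the fraction field `Frac A`.  Then
`Frac(A^G) = (Frac A)^G`: an element of `Frac A` is `G`-invariant if and only if it can be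
written as a fraction of two `G`-invariant elements of `A`. -/
theorem fractionRing_invariants (A : Type*) [CommRing A] [IsDomain A]
    (G : Type*) [Group G] [Finite G] [MulSemiringAction G A]
    [MulSemiringAction G (FractionRing A)]
    (hcomp : ∀ (g : G) (a : A),
      g • (algebraMap A (FractionRing A) a) = algebraMap A (FractionRing A) (g • a)) :
    ∀ x : FractionRing A, (∀ g : G, g • x = x) ↔
      ∃ a b : A, (∀ g : G, g • a = a) ∧ (∀ g : G, g • b = b) ∧ b ≠ 0 ∧
        x = algebraMap A (FractionRing A) a / algebraMap A (FractionRing A) b := by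
  intro x
  refine ⟨IsFractionRing.exists_invariant_div_of_invariant hcomp, ?_⟩
  rintro ⟨a, b, ha, hb, -, rfl⟩
  exact smul_algebraMap_div_eq_self hcomp ha hb
end
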